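/- arXiv:2406.12537 — 3 statements merged into one kernel-verified Lean document; each statement's English description precedes it below -/
import Mathlib

section
/- Let K be a triangle ABC in the plane with heights h_a ≤ h_b, h_c. Then inf_{O ∈ ℝ²} e_K(O) = h_a = ω_K, and moreover e_K(O) = h_a for any point O on the line through A perpendicular to BC (meeting BC at A₁) such that the angles ∠ABO and ∠ACO are both at least 90°. -/
open scoped RealInnerProductSpace
open Metric Filter

/-- Width of `K` in direction `u`: distance between the two supporting
hyperplanes of `K` orthogonal to the unit vector `u`. -/
noncomputable def widthFn {n : ℕ} (K : Set (EuclideanSpace ℝ (Fin n)))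
    (u : EuclideanSpace ℝ (Fin n)) : ℝ :=
  sSup ((fun x => ⟪x, u⟫) '' K) - sInf ((fun x => ⟪x, u⟫) '' K)

/-- Diameter of `K` in direction `u`: maximal length of a chord of `K` parallel to `u`. -/
noncomputable def dirDiam {n : ℕ} (K : Set (EuclideanSpace ℝ (Fin n)))
    (u : EuclideanSpace ℝ (Fin n)) : ℝ :=
  sSup {d : ℝ | ∃ x ∈ K, ∃ y ∈ K, (∃ t : ℝ, x - y = t • u) ∧ d = dist x y}

/-- Projective spherical distance `ρ(u,v) = arccos |⟨u,v⟩|`. -/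
noncomputable def rho {n : ℕ} (u v : EuclideanSpace ℝ (Fin n)) : ℝ :=
  Real.arccos |⟪u, v⟫|

/-- `e_K(O)`: maximal length of a chord of `K` cut by a line through `O`. -/
noncomputable def eFn {n : ℕ} (K : Set (EuclideanSpace ℝ (Fin n)))
    (O : EuclideanSpace ℝ (Fin n)) : ℝ :=
  sSup {d : ℝ | ∃ x ∈ K, ∃ y ∈ K, Collinear ℝ ({O, x, y} : Set (EuclideanSpace ℝ (Fin n))) ∧
    d = dist x y}

/-- `s_K(u)`: maximal distance between a point of `K` in one supporting hyperplane
orthogonal to `u` and a point of `K` in the other. -/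
noncomputable def sFn {n : ℕ} (K : Set (EuclideanSpace ℝ (Fin n)))
    (u : EuclideanSpace ℝ (Fin n)) : ℝ :=
  sSup {d : ℝ | ∃ A ∈ K, ∃ B ∈ K,
    (∀ x ∈ K, ⟪x, u⟫ ≤ ⟪A, u⟫) ∧ (∀ x ∈ K, ⟪B, u⟫ ≤ ⟪x, u⟫) ∧ d = dist A B}

/-- `r_K(u)`: infimum over diametral chords `[AB]` for `u` and pairs of parallel
supporting hyperplanes `H₁ ∋ A`, `H₂ ∋ B` of the distance between `H₁` and `H₂`. -/
noncomputable def rFn {n : ℕ} (K : Set (EuclideanSpace ℝ (Fin n)))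
    (u : EuclideanSpace ℝ (Fin n)) : ℝ :=
  sInf {d : ℝ | ∃ A ∈ K, ∃ B ∈ K, (∃ t : ℝ, A - B = t • u) ∧ dist A B = dirDiam K u ∧
    ∃ v : EuclideanSpace ℝ (Fin n), ‖v‖ = 1 ∧
      (∀ x ∈ K, ⟪x, v⟫ ≤ ⟪A, v⟫) ∧ (∀ x ∈ K, ⟪B, v⟫ ≤ ⟪x, v⟫) ∧ d = ⟪A - B, v⟫}

/-! Write `δ = h_a`; as `h_a · |BC| = h_b · |AC| = h_c · |AB|` is twice the area, `BC` is the
longest side.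

Lower bounds. Two of the barycentric coordinates of any point `O` have the same sign, so the
line through `O` and some vertex `P` meets the opposite side at a point `D`, and
`e_K(O) ≥ |PD| ≥ h_P ≥ δ`. For a unit vector `u`, let `P` be the vertex whose projection on `u`
lies between those of `Q` and `R`; then twice the area is
`|ω(Q - P, R - P)| ≤ |⟪Q - R, u⟫| · |BC| ≤ w(u) · |BC|`, so `w(u) ≥ δ`.

Upper bounds. The width normal to `BC` is `δ`. If `O` lies on the altitude from `A` and the
angles at `B` and `C` are obtuse, then `O` lies beyond `BC`, at some distance `τ > 0`, and `K`
lies in the disc about `O` through `A` (of radius `τ + δ`) and in the half-plane bounded by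
`BC` away from `O`. A line through `O` meets this region in a single segment of length at most
`δ`. -/

section InnerProductSpace

variable {V : Type*} [NormedAddCommGroup V] [InnerProductSpace ℝ V]

theorem norm_sub_le_norm_sub_of_inner_nonpos {x y z : V} (h : ⟪x - y, z - y⟫ ≤ 0) :
    ‖z - y‖ ≤ ‖z - x‖ := by
  have hsplit : z - x = (z - y) - (x - y) := by abel
  refine (sq_le_sq₀ (norm_nonneg _) (norm_nonneg _)).1 ?_
  rw [hsplit, norm_sub_sq_real (z - y), real_inner_comm]
  nlinarith [sq_nonneg ‖x - y‖]

theorem inner_nonpos_of_pi_div_two_le_angle {x y : V}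
    (h : Real.pi / 2 ≤ InnerProductGeometry.angle x y) : ⟪x, y⟫ ≤ 0 := by
  rw [← InnerProductGeometry.cos_angle_mul_norm_mul_norm]
  refine mul_nonpos_of_nonpos_of_nonneg (Real.cos_nonpos_of_pi_div_two_le_of_le h ?_)
    (by positivity)
  linarith [InnerProductGeometry.angle_le_pi x y, Real.pi_pos]

theorem convex_setOf_le_inner_sub (O ν : V) (c : ℝ) : Convex ℝ {x : V | c ≤ ⟪x - O, ν⟫} := by
  simp_rw [inner_sub_left, le_sub_iff_add_le]
  exact convex_halfSpace_ge
    ⟨fun x y => inner_add_left x y ν, fun a x => real_inner_smul_left x ν a⟩ _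

theorem exists_inner_eq_zero_and_dist_eq_infDist (P Q R : V) :
    ∃ t : ℝ, ⟪P - (Q + t • (R - Q)), R - Q⟫ = 0 ∧
      dist P (Q + t • (R - Q)) = infDist P (line[ℝ, Q, R] : Set V) := by
  set F := EuclideanGeometry.orthogonalProjection line[ℝ, Q, R] P
  obtain ⟨t, ht⟩ := mem_affineSpan_pair_iff_exists_lineMap_eq.1 F.2
  rw [AffineMap.lineMap_apply_module', add_comm] at ht
  refine ⟨t, ?_, ?_⟩
  · rw [ht]
    refine Submodule.inner_left_of_mem_orthogonal ?_
      (EuclideanGeometry.vsub_orthogonalProjection_mem_direction_orthogonal _ P)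
    rw [direction_affineSpan]
    exact vsub_mem_vectorSpan ℝ (by simp) (by simp)
  · rw [ht]
    exact EuclideanGeometry.dist_orthogonalProjection_eq_infDist _ P

theorem eq_smul_of_inner_eq_of_norm_sq_le {x ν : V} {δ : ℝ} (hν : ‖ν‖ = 1) (hx : ⟪x, ν⟫ = δ)
    (hle : ‖x‖ ^ 2 ≤ δ ^ 2) : x = δ • ν := by
  have h : ‖x - δ • ν‖ ^ 2 ≤ 0 := by
    rw [norm_sub_sq_real, real_inner_smul_right, hx, norm_smul, hν, mul_one, Real.norm_eq_abs,
      sq_abs]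
    linarith
  exact sub_eq_zero.1 (norm_eq_zero.1 (pow_eq_zero_iff two_ne_zero |>.1
    (le_antisymm h (sq_nonneg _))))

theorem infDist_affineSpan_pair_pos {A B C : V} (hA : A ∉ line[ℝ, B, C]) :
    0 < infDist A (line[ℝ, B, C] : Set V) :=
  (IsClosed.notMem_iff_infDist_pos (AffineSubspace.closed_of_finiteDimensional _)
    ⟨B, left_mem_affineSpan_pair ℝ B C⟩).1 hA

theorem exists_unit_inner_eq_infDist {A B C : V} (hA : A ∉ line[ℝ, B, C]) :
    ∃ ν : V, ‖ν‖ = 1 ∧ ⟪A - B, ν⟫ = infDist A (line[ℝ, B, C] : Set V) ∧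
      ⟪A - C, ν⟫ = infDist A (line[ℝ, B, C] : Set V) := by
  set δ := infDist A (line[ℝ, B, C] : Set V)
  have hδ : 0 < δ := infDist_affineSpan_pair_pos hA
  obtain ⟨t, horth, hdist⟩ := exists_inner_eq_zero_and_dist_eq_infDist A B C
  set F := B + t • (C - B)
  have hnormF : ‖A - F‖ = δ := by rw [← dist_eq_norm, hdist]
  have hAB : ⟪A - B, A - F⟫ = δ ^ 2 := by
    rw [show A - B = (A - F) + t • (C - B) by simp only [F]; abel, inner_add_left,
      real_inner_self_eq_norm_sq, hnormF, real_inner_smul_left, real_inner_comm, horth, mul_zero,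
      add_zero]
  have hAC : ⟪A - C, A - F⟫ = ⟪A - B, A - F⟫ := by
    rw [show A - C = (A - B) - (C - B) by abel, inner_sub_left, real_inner_comm (A - F) (C - B),
      horth, sub_zero]
  refine ⟨δ⁻¹ • (A - F), ?_, ?_, ?_⟩
  · rw [norm_smul, hnormF, norm_inv, Real.norm_of_nonneg hδ.le, inv_mul_cancel₀ hδ.ne']
  · rw [real_inner_smul_right, hAB]; field_simp
  · rw [real_inner_smul_right, hAC, hAB]; field_simp

end InnerProductSpace

theorem mul_nonneg_trichotomy (α β γ : ℝ) : 0 ≤ β * γ ∨ 0 ≤ α * γ ∨ 0 ≤ α * β := by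
  by_contra! h
  nlinarith [mul_pos (mul_pos (neg_pos.2 h.1) (neg_pos.2 h.2.1)) (neg_pos.2 h.2.2),
    sq_nonneg (α * β * γ)]

theorem sub_mul_sub_nonpos_trichotomy (p q r : ℝ) :
    (q - p) * (r - p) ≤ 0 ∨ (p - q) * (r - q) ≤ 0 ∨ (p - r) * (q - r) ≤ 0 := by
  by_contra! h
  nlinarith [mul_pos (mul_pos h.1 h.2.1) h.2.2, sq_nonneg ((p - q) * (q - r) * (r - p))]

theorem exists_mem_segment_collinear_of_mul_nonneg {M : Type*} [AddCommGroup M] [Module ℝ M]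
    {A B C O : M} {α β γ : ℝ} (hsum : α + β + γ = 1) (hO : O = α • A + β • B + γ • C)
    (hβγ : 0 ≤ β * γ) : ∃ D ∈ segment ℝ B C, Collinear ℝ ({O, A, D} : Set M) := by
  rcases eq_or_ne (β + γ) 0 with hzero | hne
  · have hβ : β = 0 := by nlinarith
    have hγ : γ = 0 := by linarith
    have hOA : O = A := by rw [hO, hβ, hγ, show α = 1 by linarith]; simp
    refine ⟨B, left_mem_segment ℝ B C, ?_⟩
    rw [hOA, Set.insert_eq_of_mem (Set.mem_insert A _)]
    exact collinear_pair ℝ A B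
  · have hweight : ∀ ε : ℝ, 0 ≤ ε * (β + γ) → 0 ≤ ε / (β + γ) := fun ε hε => by
      simpa [field] using div_nonneg hε (sq_nonneg (β + γ))
    set D := (β / (β + γ)) • B + (γ / (β + γ)) • C
    refine ⟨D, ⟨_, _, hweight β (by nlinarith [sq_nonneg β]),
      hweight γ (by nlinarith [sq_nonneg γ]), by field_simp, rfl⟩, ?_⟩
    refine collinear_insert_of_mem_affineSpan_pair ?_
    convert AffineMap.lineMap_mem_affineSpan_pair (β + γ) A D using 1
    rw [AffineMap.lineMap_apply_module', hO, smul_sub, smul_add, smul_smul, smul_smul,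
      mul_div_cancel₀ _ hne, mul_div_cancel₀ _ hne, show α = 1 - (β + γ) by linarith, sub_smul,
      one_smul]
    abel

section Plane

open Module

attribute [local instance] FiniteDimensional.of_fact_finrank_eq_two

variable {E : Type*} [NormedAddCommGroup E] [InnerProductSpace ℝ E] [Fact (finrank ℝ E = 2)]

theorem exists_eq_smul_add_smul_add_smul {A B C : E} (hind : AffineIndependent ℝ ![A, B, C])
    (O : E) : ∃ α β γ : ℝ, α + β + γ = 1 ∧ O = α • A + β • B + γ • C := by
  have hspan : affineSpan ℝ (Set.range ![A, B, C]) = ⊤ :=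
    hind.affineSpan_eq_top_iff_card_eq_finrank_add_one.2 (by simp [Fact.out])
  obtain ⟨w, hw, hO⟩ :=
    eq_affineCombination_of_mem_affineSpan_of_fintype (hspan ▸ AffineSubspace.mem_top ℝ E O)
  refine ⟨w 0, w 1, w 2, by simpa [Fin.sum_univ_three] using hw, ?_⟩
  rw [hO, Finset.affineCombination_eq_linear_combination _ _ _ hw]
  simp [Fin.sum_univ_three]

theorem exists_collinear_vertex_mem_segment {A B C : E} (hind : AffineIndependent ℝ ![A, B, C])
    (O : E) :
    (∃ D ∈ segment ℝ B C, Collinear ℝ ({O, A, D} : Set E)) ∨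
      (∃ D ∈ segment ℝ A C, Collinear ℝ ({O, B, D} : Set E)) ∨
      (∃ D ∈ segment ℝ A B, Collinear ℝ ({O, C, D} : Set E)) := by
  obtain ⟨α, β, γ, hsum, hO⟩ := exists_eq_smul_add_smul_add_smul hind O
  rcases mul_nonneg_trichotomy α β γ with h | h | h
  · exact Or.inl (exists_mem_segment_collinear_of_mul_nonneg hsum hO h)
  · refine Or.inr (Or.inl (exists_mem_segment_collinear_of_mul_nonneg (α := β) (β := α) (γ := γ)
      (by linarith) (by rw [hO]; abel) h))
  · refine Or.inr (Or.inr (exists_mem_segment_collinear_of_mul_nonneg (α := γ) (β := α) (γ := β)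
      (by linarith) (by rw [hO]; abel) h))

theorem eq_inner_smul_of_inner_eq_zero {w ν v : E} (hw : w ≠ 0) (hν : ‖ν‖ = 1)
    (hνw : ⟪ν, w⟫ = 0) (hvw : ⟪v, w⟫ = 0) : v = ⟪v, ν⟫ • ν := by
  let o : Orientation ℝ E (Fin 2) := (finBasisOfFinrankEq ℝ E Fact.out).orientation
  have hvν : o.areaForm ν v = 0 := by
    have := o.inner_mul_areaForm_sub w ν v
    rw [real_inner_comm, hνw, real_inner_comm, hvw] at this
    simpa [hw] using this.symm
  refine ext_inner_right ℝ fun y => ?_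
  have := o.inner_mul_inner_add_areaForm_mul_areaForm ν v y
  rw [hvν, hν] at this
  rw [real_inner_smul_left, real_inner_comm ν v]
  linarith

variable (o : Orientation ℝ E (Fin 2))

theorem areaForm_sub_sub_cycle (A B C : E) :
    o.areaForm (B - A) (C - A) = o.areaForm (C - B) (A - B) := by
  simp only [map_sub, LinearMap.sub_apply, o.areaForm_apply_self]
  rw [o.areaForm_swap C A, o.areaForm_swap C B]
  ring

theorem infDist_mul_dist_eq_abs_areaForm (P Q R : E) :
    infDist P (line[ℝ, Q, R] : Set E) * dist Q R = |o.areaForm (R - Q) (P - Q)| := by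
  obtain ⟨t, horth, hdist⟩ := exists_inner_eq_zero_and_dist_eq_infDist P Q R
  rw [← hdist, dist_eq_norm, dist_comm, dist_eq_norm, mul_comm,
    ← o.abs_areaForm_of_orthogonal (by rw [real_inner_comm]; exact horth)]
  congr 1
  simp only [map_sub, map_add, map_smul, LinearMap.sub_apply, smul_eq_mul,
    o.areaForm_apply_self]
  rw [o.areaForm_swap Q R]
  ring

theorem abs_areaForm_le_abs_inner_sub_mul {u x y : E} {a : ℝ} (hu : ‖u‖ = 1)
    (hxy : ⟪x, u⟫ * ⟪y, u⟫ ≤ 0) (hx : ‖x‖ ≤ a) (hy : ‖y‖ ≤ a) :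
    |o.areaForm x y| ≤ |⟪x - y, u⟫| * a := by
  have hid := o.inner_mul_areaForm_sub u x y
  rw [hu, one_pow, one_mul, real_inner_comm x u, real_inner_comm y u] at hid
  have hux : |o.areaForm u x| ≤ a := (o.abs_areaForm_le u x).trans (by rw [hu, one_mul]; exact hx)
  have huy : |o.areaForm u y| ≤ a := (o.abs_areaForm_le u y).trans (by rw [hu, one_mul]; exact hy)
  have ha : 0 ≤ a := (norm_nonneg x).trans hx
  have hsplit : |⟪x - y, u⟫| = |⟪x, u⟫| + |⟪y, u⟫| := by
    rw [inner_sub_left]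
    rcases mul_nonpos_iff.1 hxy with ⟨hx0, hy0⟩ | ⟨hx0, hy0⟩
    · rw [abs_of_nonneg (by linarith), abs_of_nonneg hx0, abs_of_nonpos hy0]; ring
    · rw [abs_of_nonpos (by linarith), abs_of_nonpos hx0, abs_of_nonneg hy0]; ring
  calc |o.areaForm x y|
      ≤ |⟪x, u⟫| * |o.areaForm u y| + |o.areaForm u x| * |⟪y, u⟫| := by
        rw [← hid, ← abs_mul, ← abs_mul]; exact abs_sub _ _
    _ ≤ |⟪x, u⟫| * a + a * |⟪y, u⟫| := by gcongr
    _ = |⟪x - y, u⟫| * a := by rw [hsplit]; ring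

end Plane

section ChordsAndWidths

variable {n : ℕ} {K : Set (EuclideanSpace ℝ (Fin n))}

theorem dist_le_eFn (hK : Bornology.IsBounded K) {O x y : EuclideanSpace ℝ (Fin n)}
    (hx : x ∈ K) (hy : y ∈ K) (hcol : Collinear ℝ ({O, x, y} : Set (EuclideanSpace ℝ (Fin n)))) :
    dist x y ≤ eFn K O := by
  refine le_csSup ⟨diam K, ?_⟩ ⟨x, hx, y, hy, hcol, rfl⟩
  rintro d ⟨x, hx, y, hy, -, rfl⟩
  exact dist_le_diam_of_mem hK hx hy

theorem infDist_le_eFn_of_mem_segment (hK : Bornology.IsBounded K)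
    {O P Q R D : EuclideanSpace ℝ (Fin n)} (hP : P ∈ K) (hQR : segment ℝ Q R ⊆ K)
    (hD : D ∈ segment ℝ Q R) (hcol : Collinear ℝ ({O, P, D} : Set (EuclideanSpace ℝ (Fin n)))) :
    infDist P (line[ℝ, Q, R] : Set (EuclideanSpace ℝ (Fin n))) ≤ eFn K O :=
  (infDist_le_dist_of_mem (mem_segment_iff_wbtw.1 hD).mem_affineSpan).trans
    (dist_le_eFn hK hP (hQR hD) hcol)

theorem eFn_le_of_subset_closedBall {O ν : EuclideanSpace ℝ (Fin n)} {r δ : ℝ} (hr : 0 < r)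
    (hδ : 0 ≤ δ) (hν : ‖ν‖ = 1) (hball : K ⊆ closedBall O (r + δ))
    (hhalf : ∀ x ∈ K, r ≤ ⟪x - O, ν⟫) : eFn K O ≤ δ := by
  refine Real.sSup_le ?_ hδ
  rintro d ⟨x, hx, y, hy, hcol, rfl⟩
  have hnear : ∀ z ∈ K, r ≤ dist z O := fun z hz =>
    (hhalf z hz).trans (by simpa [hν, dist_eq_norm] using real_inner_le_norm (z - O) ν)
  have hfar : ∀ z ∈ K, dist z O ≤ r + δ := fun z hz => hball hz
  rcases hcol.wbtw_or_wbtw_or_wbtw with h | h | h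
  · have := h.dist_add_dist
    rw [dist_comm O x, dist_comm O y] at this
    linarith [hnear x hx, hfar y hy]
  · have := h.dist_add_dist
    linarith [hnear y hy, hfar x hx]
  · have hO := (convex_setOf_le_inner_sub O ν r).segment_subset (hhalf y hy) (hhalf x hx)
      (mem_segment_iff_wbtw.2 h)
    simp only [Set.mem_ofPred_eq, sub_self, inner_zero_left] at hO
    linarith

theorem abs_inner_sub_le_widthFn (hK : Bornology.IsBounded K) {x y : EuclideanSpace ℝ (Fin n)}
    (hx : x ∈ K) (hy : y ∈ K) (u : EuclideanSpace ℝ (Fin n)) : |⟪x - y, u⟫| ≤ widthFn K u := by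
  have hb : Bornology.IsBounded ((fun x => ⟪x, u⟫) '' K) := by
    convert (innerSL ℝ u).lipschitz.isBounded_image hK using 2 with x
    rw [innerSL_apply_apply, real_inner_comm]
  have hle : ∀ {x y}, x ∈ K → y ∈ K → ⟪x, u⟫ - ⟪y, u⟫ ≤ widthFn K u := fun hx hy =>
    sub_le_sub (le_csSup hb.bddAbove ⟨_, hx, rfl⟩) (csInf_le hb.bddBelow ⟨_, hy, rfl⟩)
  rw [inner_sub_left, abs_sub_le_iff]
  exact ⟨hle hx hy, hle hy hx⟩

theorem widthFn_convexHull_le {s : Set (EuclideanSpace ℝ (Fin n))} (hs : s.Nonempty)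
    {u : EuclideanSpace ℝ (Fin n)} {m M : ℝ} (h : ∀ x ∈ s, m ≤ ⟪x, u⟫ ∧ ⟪x, u⟫ ≤ M) :
    widthFn (convexHull ℝ s) u ≤ M - m := by
  have hslab : convexHull ℝ s ⊆ {x | m ≤ ⟪x, u⟫ ∧ ⟪x, u⟫ ≤ M} := by
    refine convexHull_min h ?_
    have hlin : IsLinearMap ℝ fun x : EuclideanSpace ℝ (Fin n) => ⟪x, u⟫ :=
      ⟨fun x y => inner_add_left x y u, fun a x => real_inner_smul_left x u a⟩
    exact (convex_halfSpace_ge hlin m).inter (convex_halfSpace_le hlin M)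
  have hne := (hs.mono (subset_convexHull ℝ s)).image fun x => ⟪x, u⟫
  refine sub_le_sub (csSup_le hne ?_) (le_csInf hne ?_) <;> rintro _ ⟨x, hx, rfl⟩
  exacts [(hslab hx).2, (hslab hx).1]

end ChordsAndWidths

section Triangle

instance fact_finrank_euclideanSpace_fin_two :
    Fact (Module.finrank ℝ (EuclideanSpace ℝ (Fin 2)) = 2) :=
  ⟨finrank_euclideanSpace_fin⟩

variable {A B C : EuclideanSpace ℝ (Fin 2)}

theorem isBounded_convexHull_triple :
    Bornology.IsBounded (convexHull ℝ {A, B, C}) :=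
  isBounded_convexHull.2 (Set.toFinite _).isBounded

theorem infDist_le_eFn_convexHull (hind : AffineIndependent ℝ ![A, B, C])
    (hab : infDist A (line[ℝ, B, C] : Set (EuclideanSpace ℝ (Fin 2))) ≤
      infDist B (line[ℝ, A, C] : Set (EuclideanSpace ℝ (Fin 2))))
    (hac : infDist A (line[ℝ, B, C] : Set (EuclideanSpace ℝ (Fin 2))) ≤
      infDist C (line[ℝ, A, B] : Set (EuclideanSpace ℝ (Fin 2))))
    (O : EuclideanSpace ℝ (Fin 2)) :
    infDist A (line[ℝ, B, C] : Set (EuclideanSpace ℝ (Fin 2))) ≤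
      eFn (convexHull ℝ {A, B, C}) O := by
  have hchord := fun {P Q R D : EuclideanSpace ℝ (Fin 2)} (hP : P ∈ ({A, B, C} : Set _))
      (hQ : Q ∈ ({A, B, C} : Set _)) (hR : R ∈ ({A, B, C} : Set _)) =>
    infDist_le_eFn_of_mem_segment (O := O) (D := D) isBounded_convexHull_triple
      (subset_convexHull ℝ _ hP) (segment_subset_convexHull hQ hR)
  rcases exists_collinear_vertex_mem_segment hind O with ⟨D, hD, hcol⟩ | ⟨D, hD, hcol⟩ |
    ⟨D, hD, hcol⟩
  · exact hchord (by simp) (by simp) (by simp) hD hcol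
  · exact hab.trans (hchord (by simp) (by simp) (by simp) hD hcol)
  · exact hac.trans (hchord (by simp) (by simp) (by simp) hD hcol)

theorem abs_areaForm_le_widthFn_mul (o : Orientation ℝ (EuclideanSpace ℝ (Fin 2)) (Fin 2))
    (hb : dist A C ≤ dist B C) (hc : dist A B ≤ dist B C) {u : EuclideanSpace ℝ (Fin 2)}
    (hu : ‖u‖ = 1) :
    |o.areaForm (B - A) (C - A)| ≤ widthFn (convexHull ℝ {A, B, C}) u * dist B C := by
  have hw : ∀ {X Y}, X ∈ ({A, B, C} : Set (EuclideanSpace ℝ (Fin 2))) →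
      Y ∈ ({A, B, C} : Set (EuclideanSpace ℝ (Fin 2))) →
      |⟪X - Y, u⟫| * dist B C ≤ widthFn (convexHull ℝ {A, B, C}) u * dist B C :=
    fun hX hY => mul_le_mul_of_nonneg_right (abs_inner_sub_le_widthFn isBounded_convexHull_triple
      (subset_convexHull ℝ _ hX) (subset_convexHull ℝ _ hY) u) dist_nonneg
  rcases sub_mul_sub_nonpos_trichotomy ⟪A, u⟫ ⟪B, u⟫ ⟪C, u⟫ with h | h | h
  · refine le_trans ?_ (hw (X := B) (Y := C) (by simp) (by simp))
    have := abs_areaForm_le_abs_inner_sub_mul o hu (x := B - A) (y := C - A) (a := dist B C)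
      (by rwa [inner_sub_left, inner_sub_left]) (by rwa [← dist_eq_norm, dist_comm])
      (by rwa [← dist_eq_norm, dist_comm])
    rwa [sub_sub_sub_cancel_right] at this
  · refine le_trans ?_ (hw (X := A) (Y := C) (by simp) (by simp))
    have := abs_areaForm_le_abs_inner_sub_mul o hu (x := A - B) (y := C - B) (a := dist B C)
      (by rwa [inner_sub_left, inner_sub_left]) (by rwa [← dist_eq_norm])
      (by rw [← dist_eq_norm, dist_comm])
    rwa [sub_sub_sub_cancel_right, o.areaForm_swap, abs_neg, ← areaForm_sub_sub_cycle] at this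
  · refine le_trans ?_ (hw (X := A) (Y := B) (by simp) (by simp))
    have := abs_areaForm_le_abs_inner_sub_mul o hu (x := A - C) (y := B - C) (a := dist B C)
      (by rwa [inner_sub_left, inner_sub_left]) (by rwa [← dist_eq_norm])
      (by rw [← dist_eq_norm])
    rwa [sub_sub_sub_cancel_right, ← areaForm_sub_sub_cycle, ← areaForm_sub_sub_cycle] at this

theorem infDist_le_widthFn_convexHull (hind : AffineIndependent ℝ ![A, B, C])
    (hab : infDist A (line[ℝ, B, C] : Set (EuclideanSpace ℝ (Fin 2))) ≤
      infDist B (line[ℝ, A, C] : Set (EuclideanSpace ℝ (Fin 2))))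
    (hac : infDist A (line[ℝ, B, C] : Set (EuclideanSpace ℝ (Fin 2))) ≤
      infDist C (line[ℝ, A, B] : Set (EuclideanSpace ℝ (Fin 2))))
    {u : EuclideanSpace ℝ (Fin 2)} (hu : ‖u‖ = 1) :
    infDist A (line[ℝ, B, C] : Set (EuclideanSpace ℝ (Fin 2))) ≤
      widthFn (convexHull ℝ {A, B, C}) u := by
  let o : Orientation ℝ (EuclideanSpace ℝ (Fin 2)) (Fin 2) :=
    (EuclideanSpace.basisFun (Fin 2) ℝ).toBasis.orientation
  set δ := infDist A (line[ℝ, B, C] : Set (EuclideanSpace ℝ (Fin 2)))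
  set S := |o.areaForm (B - A) (C - A)|
  have hδ : 0 < δ := infDist_affineSpan_pair_pos fun h =>
    affineIndependent_iff_not_collinear_set.1 hind (collinear_insert_of_mem_affineSpan_pair h)
  have hSA : δ * dist B C = S := by
    rw [infDist_mul_dist_eq_abs_areaForm o, ← areaForm_sub_sub_cycle]
  have hSB : infDist B (line[ℝ, A, C] : Set (EuclideanSpace ℝ (Fin 2))) * dist A C = S := by
    rw [infDist_mul_dist_eq_abs_areaForm o, o.areaForm_swap, abs_neg]
  have hSC : infDist C (line[ℝ, A, B] : Set (EuclideanSpace ℝ (Fin 2))) * dist A B = S :=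
    infDist_mul_dist_eq_abs_areaForm o C A B
  have hb : dist A C ≤ dist B C := le_of_mul_le_mul_left
    (by rw [hSB, ← hSA]; exact mul_le_mul_of_nonneg_right hab dist_nonneg) (hδ.trans_le hab)
  have hc : dist A B ≤ dist B C := le_of_mul_le_mul_left
    (by rw [hSC, ← hSA]; exact mul_le_mul_of_nonneg_right hac dist_nonneg) (hδ.trans_le hac)
  have hBC : B ≠ C := by simpa using hind.injective.ne (show (1 : Fin 3) ≠ 2 by decide)
  exact le_of_mul_le_mul_right (hSA.trans_le (abs_areaForm_le_widthFn_mul o hb hc hu))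
    (dist_pos.2 hBC)

/- In the next three lemmas `ν` is the unit normal of `BC` pointing towards `A`, and `δ` is the
height from `A`. -/

theorem eFn_convexHull_le_of_inner_nonpos {O ν : EuclideanSpace ℝ (Fin 2)} {δ : ℝ} (hBC : B ≠ C)
    (hδ : 0 < δ) (hν : ‖ν‖ = 1) (hAB : ⟪A - B, ν⟫ = δ) (hAC : ⟪A - C, ν⟫ = δ)
    (hO : ⟪O - A, C - B⟫ = 0) (hBO : ⟪A - B, O - B⟫ ≤ 0) (hCO : ⟪A - C, O - C⟫ ≤ 0) :
    eFn (convexHull ℝ {A, B, C}) O ≤ δ := by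
  have hCBν : ⟪C - B, ν⟫ = 0 := by
    rw [show C - B = (A - B) - (A - C) by abel, inner_sub_left, hAB, hAC, sub_self]
  set s := ⟪A - O, ν⟫
  have hAO : A - O = s • ν := eq_inner_smul_of_inner_eq_zero (sub_ne_zero.2 hBC.symm) hν
    (by rw [real_inner_comm, hCBν]) (by rw [← neg_sub, inner_neg_left, hO, neg_zero])
  have hsq : ∀ X : EuclideanSpace ℝ (Fin 2), ⟪A - X, ν⟫ = δ → ⟪A - X, O - X⟫ ≤ 0 →
      ‖A - X‖ ^ 2 ≤ s * δ := fun X hX hXO => by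
    rw [show O - X = (A - X) - s • ν by rw [← hAO]; abel, inner_sub_right,
      real_inner_self_eq_norm_sq, real_inner_smul_right, hX] at hXO
    linarith
  have hs : δ < s := by
    by_contra! hsδ
    have hperp : ∀ X : EuclideanSpace ℝ (Fin 2), ⟪A - X, ν⟫ = δ → ⟪A - X, O - X⟫ ≤ 0 →
        A - X = δ • ν := fun X hX hXO =>
      eq_smul_of_inner_eq_of_norm_sq_le hν hX (by nlinarith [hsq X hX hXO])
    exact hBC (sub_right_injective ((hperp B hAB hBO).trans (hperp C hAC hCO).symm))
  have hdistA : dist A O = s := by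
    rw [dist_eq_norm, hAO, norm_smul, hν, mul_one, Real.norm_of_nonneg (hδ.trans hs).le]
  refine eFn_le_of_subset_closedBall (sub_pos.2 hs) hδ.le hν ?_ ?_
  · refine convexHull_min ?_ (convex_closedBall O _)
    have hobtuse : ∀ X, ⟪A - X, O - X⟫ ≤ 0 → X ∈ closedBall O (s - δ + δ) := fun X hX => by
      rw [mem_closedBall, sub_add_cancel, dist_comm, dist_eq_norm, ← hdistA, dist_comm,
        dist_eq_norm]
      exact norm_sub_le_norm_sub_of_inner_nonpos hX
    simp only [Set.insert_subset_iff, Set.singleton_subset_iff]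
    exact ⟨by rw [mem_closedBall, sub_add_cancel, hdistA], hobtuse B hBO, hobtuse C hCO⟩
  · refine fun x hx => convexHull_min ?_ (convex_setOf_le_inner_sub O ν (s - δ)) hx
    have hside : ∀ X, ⟪A - X, ν⟫ = δ → s - δ ≤ ⟪X - O, ν⟫ := fun X hX => by
      rw [show X - O = (A - O) - (A - X) by abel, inner_sub_left, hX]
    simp only [Set.insert_subset_iff, Set.singleton_subset_iff, Set.mem_ofPred_eq]
    exact ⟨by linarith, hside B hAB, hside C hAC⟩

theorem exists_eFn_convexHull_le {ν : EuclideanSpace ℝ (Fin 2)} {δ : ℝ} (hBC : B ≠ C)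
    (hδ : 0 < δ) (hν : ‖ν‖ = 1) (hAB : ⟪A - B, ν⟫ = δ) (hAC : ⟪A - C, ν⟫ = δ) :
    ∃ O, eFn (convexHull ℝ {A, B, C}) O ≤ δ := by
  set t := (‖A - B‖ ^ 2 + ‖A - C‖ ^ 2) / δ
  have hobtuse : ∀ X : EuclideanSpace ℝ (Fin 2), ⟪A - X, ν⟫ = δ →
      ⟪A - X, (A - t • ν) - X⟫ = ‖A - X‖ ^ 2 - (‖A - B‖ ^ 2 + ‖A - C‖ ^ 2) := fun X hX => by
    rw [show A - t • ν - X = (A - X) - t • ν by abel, inner_sub_right, real_inner_self_eq_norm_sq,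
      real_inner_smul_right, hX, div_mul_cancel₀ _ hδ.ne']
  refine ⟨A - t • ν, eFn_convexHull_le_of_inner_nonpos hBC hδ hν hAB hAC ?_ ?_ ?_⟩
  · rw [sub_sub_cancel_left, inner_neg_left, real_inner_smul_left,
      show C - B = (A - B) - (A - C) by abel, inner_sub_right, real_inner_comm (A - B),
      hAB, real_inner_comm (A - C), hAC]
    ring
  · rw [hobtuse B hAB]; linarith [sq_nonneg ‖A - C‖]
  · rw [hobtuse C hAC]; linarith [sq_nonneg ‖A - B‖]

theorem widthFn_convexHull_le_of_inner_eq {ν : EuclideanSpace ℝ (Fin 2)} {δ : ℝ} (hδ : 0 ≤ δ)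
    (hAB : ⟪A - B, ν⟫ = δ) (hAC : ⟪A - C, ν⟫ = δ) : widthFn (convexHull ℝ {A, B, C}) ν ≤ δ := by
  rw [inner_sub_left] at hAB hAC
  refine (widthFn_convexHull_le ⟨A, Set.mem_insert A _⟩ (m := ⟪B, ν⟫) (M := ⟪A, ν⟫) ?_).trans
    hAB.le
  simp only [Set.mem_insert_iff, Set.mem_singleton_iff, forall_eq_or_imp, forall_eq]
  refine ⟨⟨?_, le_rfl⟩, ⟨le_rfl, ?_⟩, ⟨?_, ?_⟩⟩ <;> linarith

end Triangle

theorem triangle_eFn_inf (A B C : EuclideanSpace ℝ (Fin 2))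
    (hind : AffineIndependent ℝ ![A, B, C])
    (hab : Metric.infDist A (affineSpan ℝ {B, C} : Set (EuclideanSpace ℝ (Fin 2))) ≤
      Metric.infDist B (affineSpan ℝ {A, C} : Set (EuclideanSpace ℝ (Fin 2))))
    (hac : Metric.infDist A (affineSpan ℝ {B, C} : Set (EuclideanSpace ℝ (Fin 2))) ≤
      Metric.infDist C (affineSpan ℝ {A, B} : Set (EuclideanSpace ℝ (Fin 2)))) :
    (⨅ O : EuclideanSpace ℝ (Fin 2), eFn (convexHull ℝ {A, B, C}) O) =
      Metric.infDist A (affineSpan ℝ {B, C} : Set (EuclideanSpace ℝ (Fin 2))) ∧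
    (⨅ u : sphere (0 : EuclideanSpace ℝ (Fin 2)) 1, widthFn (convexHull ℝ {A, B, C}) u) =
      Metric.infDist A (affineSpan ℝ {B, C} : Set (EuclideanSpace ℝ (Fin 2))) ∧
    (∀ O : EuclideanSpace ℝ (Fin 2), ⟪O - A, C - B⟫ = 0 →
      Real.pi / 2 ≤ EuclideanGeometry.angle A B O →
      Real.pi / 2 ≤ EuclideanGeometry.angle A C O →
      eFn (convexHull ℝ {A, B, C}) O =
        Metric.infDist A (affineSpan ℝ {B, C} : Set (EuclideanSpace ℝ (Fin 2)))) := by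
  set δ := infDist A (line[ℝ, B, C] : Set (EuclideanSpace ℝ (Fin 2)))
  have hA : A ∉ line[ℝ, B, C] := fun h =>
    affineIndependent_iff_not_collinear_set.1 hind (collinear_insert_of_mem_affineSpan_pair h)
  have hBC : B ≠ C := by simpa using hind.injective.ne (show (1 : Fin 3) ≠ 2 by decide)
  have hδ : 0 < δ := infDist_affineSpan_pair_pos hA
  obtain ⟨ν, hν, hAB, hAC⟩ := exists_unit_inner_eq_infDist hA
  have heFn : ∀ O, δ ≤ eFn (convexHull ℝ {A, B, C}) O := infDist_le_eFn_convexHull hind hab hac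
  have hwidth : ∀ u : sphere (0 : EuclideanSpace ℝ (Fin 2)) 1,
      δ ≤ widthFn (convexHull ℝ {A, B, C}) u := fun u =>
    infDist_le_widthFn_convexHull hind hab hac (mem_sphere_zero_iff_norm.1 u.2)
  have hνS : ν ∈ sphere (0 : EuclideanSpace ℝ (Fin 2)) 1 := mem_sphere_zero_iff_norm.2 hν
  have : Nonempty (sphere (0 : EuclideanSpace ℝ (Fin 2)) 1) := ⟨⟨ν, hνS⟩⟩
  refine ⟨?_, ?_, fun O hO hB hC => le_antisymm ?_ (heFn O)⟩
  · obtain ⟨O, hO⟩ := exists_eFn_convexHull_le hBC hδ hν hAB hAC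
    exact le_antisymm ((ciInf_le ⟨δ, Set.forall_mem_range.2 heFn⟩ O).trans hO) (le_ciInf heFn)
  · exact le_antisymm ((ciInf_le ⟨δ, Set.forall_mem_range.2 hwidth⟩ ⟨ν, hνS⟩).trans
      (widthFn_convexHull_le_of_inner_eq hδ.le hAB hAC)) (le_ciInf hwidth)
  · exact eFn_convexHull_le_of_inner_nonpos hBC hδ hν hAB hAC hO
      (inner_nonpos_of_pi_div_two_le_angle hB) (inner_nonpos_of_pi_div_two_le_angle hC)
end

section
/- Let K_j be a decreasing sequence of convex bodies with intersection K, and let u_j → u in S^{n-1}. Then limsup_j s_{K_j}(u_j) ≤ s_K(u), where s_K(u) is the maximal distance between a point of K in one supporting hyperplane orthogonal to u and a point of K in the other. In particular s_K is upper semicontinuous on S^{n-1}. -/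
set_option maxHeartbeats 1000000


open scoped RealInnerProductSpace
open Metric Filter

private lemma sFn_exists_max {n : ℕ} {K : Set (EuclideanSpace ℝ (Fin n))}
    (hc : IsCompact K) (hne : K.Nonempty) (u : EuclideanSpace ℝ (Fin n)) :
    ∃ A ∈ K, ∃ B ∈ K, (∀ x ∈ K, ⟪x, u⟫ ≤ ⟪A, u⟫) ∧ (∀ x ∈ K, ⟪B, u⟫ ≤ ⟪x, u⟫) ∧
      sFn K u = dist A B := by
  have hcont : Continuous fun x : EuclideanSpace ℝ (Fin n) => ⟪x, u⟫ :=
    continuous_id.inner continuous_const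
  set F₁ : Set (EuclideanSpace ℝ (Fin n)) := K ∩ {x | ∀ y ∈ K, ⟪y, u⟫ ≤ ⟪x, u⟫} with hF₁
  set F₂ : Set (EuclideanSpace ℝ (Fin n)) := K ∩ {x | ∀ y ∈ K, ⟪x, u⟫ ≤ ⟪y, u⟫} with hF₂
  have hF₁c : IsCompact F₁ := by
    apply hc.inter_right
    have : {x : EuclideanSpace ℝ (Fin n) | ∀ y ∈ K, ⟪y, u⟫ ≤ ⟪x, u⟫} =
        ⋂ y ∈ K, {x | ⟪y, u⟫ ≤ ⟪x, u⟫} := by ext x; simp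
    rw [this]
    exact isClosed_biInter fun y _ => isClosed_le continuous_const hcont
  have hF₂c : IsCompact F₂ := by
    apply hc.inter_right
    have : {x : EuclideanSpace ℝ (Fin n) | ∀ y ∈ K, ⟪x, u⟫ ≤ ⟪y, u⟫} =
        ⋂ y ∈ K, {x | ⟪x, u⟫ ≤ ⟪y, u⟫} := by ext x; simp
    rw [this]
    exact isClosed_biInter fun y _ => isClosed_le hcont continuous_const
  have hF₁ne : F₁.Nonempty := by
    obtain ⟨a, haK, ha⟩ := hc.exists_isMaxOn hne hcont.continuousOn
    exact ⟨a, haK, fun y hy => ha hy⟩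
  have hF₂ne : F₂.Nonempty := by
    obtain ⟨a, haK, ha⟩ := hc.exists_isMinOn hne hcont.continuousOn
    exact ⟨a, haK, fun y hy => ha hy⟩
  have hSeq : {d : ℝ | ∃ A ∈ K, ∃ B ∈ K,
      (∀ x ∈ K, ⟪x, u⟫ ≤ ⟪A, u⟫) ∧ (∀ x ∈ K, ⟪B, u⟫ ≤ ⟪x, u⟫) ∧ d = dist A B} =
      (fun q : EuclideanSpace ℝ (Fin n) × EuclideanSpace ℝ (Fin n) => dist q.1 q.2) ''
        (F₁ ×ˢ F₂) := by
    ext d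
    constructor
    · rintro ⟨A, hA, B, hB, h1, h2, rfl⟩
      exact ⟨(A, B), ⟨⟨hA, h1⟩, ⟨hB, h2⟩⟩, rfl⟩
    · rintro ⟨⟨A, B⟩, ⟨⟨hA, h1⟩, ⟨hB, h2⟩⟩, rfl⟩
      exact ⟨A, hA, B, hB, h1, h2, rfl⟩
  have hSc : IsCompact ((fun q : EuclideanSpace ℝ (Fin n) × EuclideanSpace ℝ (Fin n) =>
      dist q.1 q.2) '' (F₁ ×ˢ F₂)) := (hF₁c.prod hF₂c).image continuous_dist
  have hSne : ((fun q : EuclideanSpace ℝ (Fin n) × EuclideanSpace ℝ (Fin n) =>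
      dist q.1 q.2) '' (F₁ ×ˢ F₂)).Nonempty := (hF₁ne.prod hF₂ne).image _
  have hmem := hSc.sSup_mem hSne
  rw [← hSeq] at hmem
  obtain ⟨A, hA, B, hB, h1, h2, hd⟩ := hmem
  exact ⟨A, hA, B, hB, h1, h2, by rw [sFn]; exact hd⟩

private lemma sFn_bddAbove {n : ℕ} {K : Set (EuclideanSpace ℝ (Fin n))}
    (hc : IsCompact K) (u : EuclideanSpace ℝ (Fin n)) :
    BddAbove {d : ℝ | ∃ A ∈ K, ∃ B ∈ K,
      (∀ x ∈ K, ⟪x, u⟫ ≤ ⟪A, u⟫) ∧ (∀ x ∈ K, ⟪B, u⟫ ≤ ⟪x, u⟫) ∧ d = dist A B} := by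
  refine ⟨diam K, ?_⟩
  rintro d ⟨A, hA, B, hB, _, _, rfl⟩
  exact dist_le_diam_of_mem hc.isBounded hA hB

private lemma sFn_nonneg {n : ℕ} {K : Set (EuclideanSpace ℝ (Fin n))}
    (hc : IsCompact K) (hne : K.Nonempty) (u : EuclideanSpace ℝ (Fin n)) :
    0 ≤ sFn K u := by
  obtain ⟨A, _, B, _, _, _, h⟩ := sFn_exists_max hc hne u
  rw [h]; exact dist_nonneg

private lemma sFn_le_diam {n : ℕ} {K : Set (EuclideanSpace ℝ (Fin n))}
    (hc : IsCompact K) (hne : K.Nonempty) (u : EuclideanSpace ℝ (Fin n)) :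
    sFn K u ≤ diam K := by
  obtain ⟨A, hA, B, hB, _, _, h⟩ := sFn_exists_max hc hne u
  rw [h]; exact dist_le_diam_of_mem hc.isBounded hA hB

private lemma sFn_limsup_aux {n : ℕ} {Kj : ℕ → Set (EuclideanSpace ℝ (Fin n))}
    (hKjc : ∀ j, IsCompact (Kj j)) (hKjne : ∀ j, (Kj j).Nonempty)
    (hdec : Antitone Kj) {K : Set (EuclideanSpace ℝ (Fin n))}
    (hK : K = ⋂ j, Kj j) (hKne : K.Nonempty)
    {uj : ℕ → EuclideanSpace ℝ (Fin n)} {u : EuclideanSpace ℝ (Fin n)}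
    (hconv : Tendsto uj atTop (nhds u)) :
    Filter.limsup (fun j => sFn (Kj j) (uj j)) Filter.atTop ≤ sFn K u := by
  have hKclosed : IsClosed K := by
    rw [hK]; exact isClosed_iInter fun j => (hKjc j).isClosed
  have hKsub0 : K ⊆ Kj 0 := by rw [hK]; exact Set.iInter_subset Kj 0
  have hKc : IsCompact K := (hKjc 0).of_isClosed_subset hKclosed hKsub0
  have h0 : ∀ j, 0 ≤ sFn (Kj j) (uj j) := fun j => sFn_nonneg (hKjc j) (hKjne j) _
  have key : ∀ ε > (0:ℝ), ∀ᶠ j in atTop, sFn (Kj j) (uj j) ≤ sFn K u + ε := by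
    intro ε hε
    by_contra hcon
    rw [Filter.not_eventually] at hcon
    have hcon' : ∃ᶠ j in atTop, sFn K u + ε < sFn (Kj j) (uj j) := by
      apply hcon.mono; intro j hj; exact lt_of_not_ge hj
    obtain ⟨φ, hφ, hφP⟩ := Filter.extraction_of_frequently_atTop hcon'
    have H : ∀ j : ℕ, ∃ A ∈ Kj (φ j), ∃ B ∈ Kj (φ j),
        (∀ x ∈ Kj (φ j), ⟪x, uj (φ j)⟫ ≤ ⟪A, uj (φ j)⟫) ∧
        (∀ x ∈ Kj (φ j), ⟪B, uj (φ j)⟫ ≤ ⟪x, uj (φ j)⟫) ∧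
        sFn (Kj (φ j)) (uj (φ j)) = dist A B :=
      fun j => sFn_exists_max (hKjc _) (hKjne _) _
    choose A hAmem B hBmem hAsup hBsup heq using H
    have hA0 : ∀ j, A j ∈ Kj 0 := fun j => hdec (Nat.zero_le _) (hAmem j)
    obtain ⟨A', hA', ψ₁, hψ₁, hAt⟩ := (hKjc 0).tendsto_subseq hA0
    have hB0 : ∀ j, B (ψ₁ j) ∈ Kj 0 := fun j => hdec (Nat.zero_le _) (hBmem _)
    obtain ⟨B', hB', ψ₂, hψ₂, hBt⟩ := (hKjc 0).tendsto_subseq hB0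
    set σ : ℕ → ℕ := fun j => φ (ψ₁ (ψ₂ j)) with hσ
    have hσmono : StrictMono σ := hφ.comp (hψ₁.comp hψ₂)
    have haT : Tendsto (fun j => A (ψ₁ (ψ₂ j))) atTop (nhds A') :=
      hAt.comp hψ₂.tendsto_atTop
    have hbT : Tendsto (fun j => B (ψ₁ (ψ₂ j))) atTop (nhds B') := hBt
    have huT : Tendsto (fun j => uj (σ j)) atTop (nhds u) :=
      hconv.comp hσmono.tendsto_atTop
    have hmemσA : ∀ j, A (ψ₁ (ψ₂ j)) ∈ Kj (σ j) := fun j => hAmem _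
    have hmemσB : ∀ j, B (ψ₁ (ψ₂ j)) ∈ Kj (σ j) := fun j => hBmem _
    have hKmem : ∀ (C : ℕ → EuclideanSpace ℝ (Fin n)) (C' : EuclideanSpace ℝ (Fin n)),
        (∀ j, C j ∈ Kj (σ j)) → Tendsto C atTop (nhds C') → C' ∈ K := by
      intro C C' hCmem hCt
      rw [hK, Set.mem_iInter]
      intro m
      refine (hKjc m).isClosed.mem_of_tendsto hCt ?_
      filter_upwards [eventually_ge_atTop m] with j hj
      exact hdec (le_trans hj hσmono.le_apply) (hCmem j)
    have hA'K : A' ∈ K := hKmem _ _ hmemσA haT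
    have hB'K : B' ∈ K := hKmem _ _ hmemσB hbT
    have hxK : ∀ x ∈ K, ∀ j, x ∈ Kj (σ j) := by
      intro x hx j; rw [hK, Set.mem_iInter] at hx; exact hx _
    have hsupA : ∀ x ∈ K, ⟪x, u⟫ ≤ ⟪A', u⟫ := by
      intro x hx
      refine le_of_tendsto_of_tendsto' (tendsto_const_nhds.inner huT) (haT.inner huT) ?_
      intro j
      exact hAsup (ψ₁ (ψ₂ j)) x (hxK x hx j)
    have hsupB : ∀ x ∈ K, ⟪B', u⟫ ≤ ⟪x, u⟫ := by
      intro x hx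
      refine le_of_tendsto_of_tendsto' (hbT.inner huT) (tendsto_const_nhds.inner huT) ?_
      intro j
      exact hBsup (ψ₁ (ψ₂ j)) x (hxK x hx j)
    have hdistT : Tendsto (fun j => dist (A (ψ₁ (ψ₂ j))) (B (ψ₁ (ψ₂ j)))) atTop
        (nhds (dist A' B')) := haT.dist hbT
    have hge : sFn K u + ε ≤ dist A' B' := by
      refine ge_of_tendsto hdistT (Filter.Eventually.of_forall fun j => ?_)
      rw [← heq (ψ₁ (ψ₂ j))]
      exact (hφP (ψ₁ (ψ₂ j))).le
    have hle : dist A' B' ≤ sFn K u :=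
      le_csSup (sFn_bddAbove hKc u) ⟨A', hA'K, B', hB'K, hsupA, hsupB, rfl⟩
    linarith
  refine le_of_forall_pos_le_add fun ε hε => ?_
  exact Filter.limsup_le_of_le (Filter.isCoboundedUnder_le_of_le atTop h0) (key ε hε)

theorem sFn_limsup_le {n : ℕ} (hn : 2 ≤ n)
    (Kj : ℕ → Set (EuclideanSpace ℝ (Fin n)))
    (hKjc : ∀ j, IsCompact (Kj j)) (hKjconv : ∀ j, Convex ℝ (Kj j))
    (hKjint : ∀ j, (interior (Kj j)).Nonempty) (hdec : Antitone Kj)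
    (K : Set (EuclideanSpace ℝ (Fin n))) (hK : K = ⋂ j, Kj j)
    (hKint : (interior K).Nonempty)
    (uj : ℕ → EuclideanSpace ℝ (Fin n)) (huj : ∀ j, ‖uj j‖ = 1)
    (u : EuclideanSpace ℝ (Fin n)) (hu : ‖u‖ = 1)
    (hconv : Filter.Tendsto uj Filter.atTop (nhds u)) :
    Filter.limsup (fun j => sFn (Kj j) (uj j)) Filter.atTop ≤ sFn K u ∧
    UpperSemicontinuousOn (sFn K) (sphere (0 : EuclideanSpace ℝ (Fin n)) 1) := by
  have hKjne : ∀ j, (Kj j).Nonempty := fun j => (hKjint j).mono interior_subset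
  have hKne : K.Nonempty := hKint.mono interior_subset
  have hKclosed : IsClosed K := by
    rw [hK]; exact isClosed_iInter fun j => (hKjc j).isClosed
  have hKsub0 : K ⊆ Kj 0 := by rw [hK]; exact Set.iInter_subset Kj 0
  have hKc : IsCompact K := (hKjc 0).of_isClosed_subset hKclosed hKsub0
  constructor
  · exact sFn_limsup_aux hKjc hKjne hdec hK hKne hconv
  · intro v hv y hy
    by_contra hcontra
    rw [Filter.not_eventually] at hcontra
    obtain ⟨w, hwt, hwp⟩ := Filter.exists_seq_forall_of_frequently hcontra
    have hwtn : Tendsto w atTop (nhds v) := hwt.mono_right nhdsWithin_le_nhds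
    have haux : Filter.limsup (fun j => sFn K (w j)) Filter.atTop ≤ sFn K v := by
      refine sFn_limsup_aux (Kj := fun _ => K) (fun _ => hKc) (fun _ => hKne)
        (fun _ _ _ => le_refl K) ?_ hKne hwtn
      exact (Set.iInter_const K).symm
    have hyle : y ≤ Filter.limsup (fun j => sFn K (w j)) Filter.atTop := by
      refine Filter.le_limsup_of_frequently_le
        (Filter.Frequently.of_forall fun j => not_lt.mp (hwp j)) ?_
      exact Filter.isBoundedUnder_of ⟨diam K, fun j => sFn_le_diam hKc hKne (w j)⟩
    linarith
end

section
/- Let K_j be a decreasing sequence of convex bodies with intersection K and u_j → u in S^{n-1}. Then lim_j d_{K_j}(u_j) = d_K(u), and liminf_j r_{K_j}(u_j) ≥ r_K(u); in particular r_K is lower semicontinuous on S^{n-1}. -/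
open scoped RealInnerProductSpace
open Metric Filter

namespace RFnAux

variable {n : ℕ}

/-- The set of chord lengths of `K` parallel to `u`. -/
def chordSet (K : Set (EuclideanSpace ℝ (Fin n))) (u : EuclideanSpace ℝ (Fin n)) : Set ℝ :=
  {d : ℝ | ∃ x ∈ K, ∃ y ∈ K, (∃ t : ℝ, x - y = t • u) ∧ d = dist x y}

lemma dirDiam_eq_sSup (K : Set (EuclideanSpace ℝ (Fin n))) (u : EuclideanSpace ℝ (Fin n)) :
    dirDiam K u = sSup (chordSet K u) := rfl

lemma chordSet_bddAbove {K : Set (EuclideanSpace ℝ (Fin n))} (hK : Bornology.IsBounded K)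
    (u : EuclideanSpace ℝ (Fin n)) : BddAbove (chordSet K u) := by
  refine ⟨Metric.diam K, ?_⟩
  rintro d ⟨x, hx, y, hy, -, rfl⟩
  exact Metric.dist_le_diam_of_mem hK hx hy

lemma zero_mem_chordSet {K : Set (EuclideanSpace ℝ (Fin n))} (hne : K.Nonempty)
    (u : EuclideanSpace ℝ (Fin n)) : (0 : ℝ) ∈ chordSet K u := by
  obtain ⟨x, hx⟩ := hne
  exact ⟨x, hx, x, hx, ⟨0, by simp⟩, by simp⟩

lemma dist_le_dirDiam {K : Set (EuclideanSpace ℝ (Fin n))} (hK : Bornology.IsBounded K)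
    {u : EuclideanSpace ℝ (Fin n)} {x y : EuclideanSpace ℝ (Fin n)}
    (hx : x ∈ K) (hy : y ∈ K) (h : ∃ t : ℝ, x - y = t • u) :
    dist x y ≤ dirDiam K u :=
  le_csSup (chordSet_bddAbove hK u) ⟨x, hx, y, hy, h, rfl⟩

lemma dirDiam_nonneg {K : Set (EuclideanSpace ℝ (Fin n))} (hb : Bornology.IsBounded K)
    (hne : K.Nonempty) (u : EuclideanSpace ℝ (Fin n)) : 0 ≤ dirDiam K u :=
  le_csSup (chordSet_bddAbove hb u) (zero_mem_chordSet hne u)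

lemma exists_dirDiam_attained {K : Set (EuclideanSpace ℝ (Fin n))} (hc : IsCompact K)
    (hne : K.Nonempty) (u : EuclideanSpace ℝ (Fin n)) :
    ∃ x ∈ K, ∃ y ∈ K, (∃ t : ℝ, x - y = t • u) ∧ dist x y = dirDiam K u := by
  set P : Set (EuclideanSpace ℝ (Fin n) × EuclideanSpace ℝ (Fin n)) :=
    (K ×ˢ K) ∩ {p | p.1 - p.2 ∈ (ℝ ∙ u : Submodule ℝ (EuclideanSpace ℝ (Fin n)))} with hP
  have hPc : IsCompact P :=
    (hc.prod hc).inter_right <|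
      ((ℝ ∙ u : Submodule ℝ (EuclideanSpace ℝ (Fin n))).closed_of_finiteDimensional).preimage
        (continuous_fst.sub continuous_snd)
  have himg : chordSet K u = (fun p : EuclideanSpace ℝ (Fin n) × EuclideanSpace ℝ (Fin n) =>
      dist p.1 p.2) '' P := by
    ext d
    constructor
    · rintro ⟨x, hx, y, hy, ⟨t, ht⟩, rfl⟩
      exact ⟨(x, y), ⟨⟨hx, hy⟩, Submodule.mem_span_singleton.mpr ⟨t, ht.symm⟩⟩, rfl⟩
    · rintro ⟨⟨x, y⟩, ⟨⟨hx, hy⟩, hs⟩, rfl⟩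
      obtain ⟨t, ht⟩ := Submodule.mem_span_singleton.mp hs
      exact ⟨x, hx, y, hy, ⟨t, ht.symm⟩, rfl⟩
  obtain ⟨x0, hx0⟩ := hne
  have hPne : P.Nonempty := ⟨(x0, x0), ⟨⟨hx0, hx0⟩, by simp⟩⟩
  have hmem : sSup (chordSet K u) ∈ chordSet K u := by
    rw [himg]
    exact (hPc.image (continuous_fst.dist continuous_snd)).sSup_mem (hPne.image _)
  obtain ⟨x, hx, y, hy, ht, hd⟩ := hmem
  exact ⟨x, hx, y, hy, ht, hd.symm⟩

lemma dirDiam_pos {K : Set (EuclideanSpace ℝ (Fin n))} (hb : Bornology.IsBounded K)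
    {u : EuclideanSpace ℝ (Fin n)} (hu : ‖u‖ = 1) (hint : (interior K).Nonempty) :
    0 < dirDiam K u := by
  obtain ⟨z, hz⟩ := hint
  obtain ⟨δ, hδ, hball⟩ := Metric.isOpen_iff.mp isOpen_interior z hz
  have hzK : z ∈ K := interior_subset hz
  have h2 : z + (δ / 2) • u ∈ K := by
    refine interior_subset (hball ?_)
    have : dist (z + (δ / 2) • u) z = δ / 2 := by
      rw [dist_eq_norm]
      simp [norm_smul, hu, abs_of_pos hδ]
    rw [Metric.mem_ball, this]; linarith
  have hle := dist_le_dirDiam hb h2 hzK ⟨δ / 2, by abel⟩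
  have hd : dist (z + (δ / 2) • u) z = δ / 2 := by
    rw [dist_eq_norm]
    simp [norm_smul, hu, abs_of_pos hδ]
  rw [hd] at hle
  linarith

end RFnAux

namespace RFnAux
variable {n : ℕ}

/-- The defining set of `rFn`. -/
def rSet (K : Set (EuclideanSpace ℝ (Fin n))) (u : EuclideanSpace ℝ (Fin n)) : Set ℝ :=
  {d : ℝ | ∃ A ∈ K, ∃ B ∈ K, (∃ t : ℝ, A - B = t • u) ∧ dist A B = dirDiam K u ∧
    ∃ v : EuclideanSpace ℝ (Fin n), ‖v‖ = 1 ∧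
      (∀ x ∈ K, ⟪x, v⟫ ≤ ⟪A, v⟫) ∧ (∀ x ∈ K, ⟪B, v⟫ ≤ ⟪x, v⟫) ∧ d = ⟪A - B, v⟫}

lemma rFn_eq_sInf (K : Set (EuclideanSpace ℝ (Fin n))) (u : EuclideanSpace ℝ (Fin n)) :
    rFn K u = sInf (rSet K u) := rfl

lemma rSet_nonneg {K : Set (EuclideanSpace ℝ (Fin n))} {u : EuclideanSpace ℝ (Fin n)} {d : ℝ}
    (hd : d ∈ rSet K u) : 0 ≤ d := by
  obtain ⟨A, hA, B, hB, -, -, v, -, hAv, hBv, rfl⟩ := hd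
  have h := hAv B hB
  rw [inner_sub_left]
  linarith

lemma rFn_nonneg' (K : Set (EuclideanSpace ℝ (Fin n))) (u : EuclideanSpace ℝ (Fin n)) :
    0 ≤ rFn K u := Real.sInf_nonneg fun _ hd => rSet_nonneg hd

lemma rSet_bddBelow (K : Set (EuclideanSpace ℝ (Fin n))) (u : EuclideanSpace ℝ (Fin n)) :
    BddBelow (rSet K u) := ⟨0, fun _ hd => rSet_nonneg hd⟩

lemma subset_closure_interior {K : Set (EuclideanSpace ℝ (Fin n))} (hconv : Convex ℝ K)
    (hint : (interior K).Nonempty) : K ⊆ closure (interior K) := by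
  obtain ⟨z, hz⟩ := hint
  intro x hx
  have hmem : ∀ m : ℕ, x + (1 / (m + 1) : ℝ) • (z - x) ∈ interior K := fun m =>
    hconv.add_smul_sub_mem_interior hx hz
      ⟨by positivity, by rw [div_le_one (by positivity)]; linarith⟩
  have htend : Tendsto (fun m : ℕ => x + (1 / (m + 1) : ℝ) • (z - x)) atTop (nhds x) := by
    have h1 : Tendsto (fun m : ℕ => (1 / (m + 1) : ℝ)) atTop (nhds 0) :=
      tendsto_one_div_add_atTop_nhds_zero_nat
    have := (h1.smul_const (z - x)).const_add x
    simpa using this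
  exact mem_closure_of_tendsto htend (Filter.Eventually.of_forall hmem)

/-- Existence of a diametral chord with a common pair of parallel supporting hyperplanes. -/
lemma exists_rSet_mem {K : Set (EuclideanSpace ℝ (Fin n))} (hc : IsCompact K)
    (hconv : Convex ℝ K) (hint : (interior K).Nonempty) {u : EuclideanSpace ℝ (Fin n)}
    (hu : ‖u‖ = 1) : ∃ d ∈ rSet K u, d ≤ dirDiam K u := by
  have hb : Bornology.IsBounded K := hc.isBounded
  have hne : K.Nonempty := hint.mono interior_subset
  set D := dirDiam K u with hD
  have hDpos : 0 < D := dirDiam_pos hb hu hint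
  -- a diametral chord, oriented so that A - B = D • u
  obtain ⟨x, hx, y, hy, ⟨t, ht⟩, hdist⟩ := exists_dirDiam_attained hc hne u
  have habs : |t| = D := by
    rw [hD, ← hdist, dist_eq_norm, ht, norm_smul, hu, mul_one, Real.norm_eq_abs]
  obtain ⟨A, B, hA, hB, hAB⟩ :
      ∃ A B, A ∈ K ∧ B ∈ K ∧ A - B = D • u := by
    rcases le_or_gt 0 t with h | h
    · exact ⟨x, y, hx, hy, by rw [ht, ← habs, abs_of_nonneg h]⟩
    · refine ⟨y, x, hy, hx, ?_⟩
      have h2 : y - x = (-t) • u := by rw [neg_smul, ← ht]; abel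
      rw [h2, ← habs, abs_of_neg h]
  -- interiors of K and K + D•u are disjoint
  have hdisj : Disjoint (interior K) ((fun z => z + D • u) '' interior K) := by
    rw [Set.disjoint_left]
    rintro p hp ⟨w, hw, rfl⟩
    obtain ⟨η₁, hη₁, hbp⟩ := Metric.isOpen_iff.mp isOpen_interior _ hp
    obtain ⟨η₂, hη₂, hbw⟩ := Metric.isOpen_iff.mp isOpen_interior _ hw
    set η := min η₁ η₂ / 2 with hηdef
    have hηpos : 0 < η := by positivity
    have hP1 : w + D • u + η • u ∈ K := by
      refine interior_subset (hbp ?_)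
      rw [Metric.mem_ball, dist_eq_norm]
      have he : w + D • u + η • u - (w + D • u) = η • u := by abel
      rw [he, norm_smul, hu, mul_one, Real.norm_eq_abs, abs_of_pos hηpos]
      calc η < min η₁ η₂ := by rw [hηdef]; linarith [lt_min hη₁ hη₂]
        _ ≤ η₁ := min_le_left _ _
    have hP2 : w - η • u ∈ K := by
      refine interior_subset (hbw ?_)
      rw [Metric.mem_ball, dist_eq_norm]
      have he : w - η • u - w = (-η) • u := by rw [neg_smul]; abel
      rw [he, norm_smul, hu, mul_one, Real.norm_eq_abs, abs_of_neg (neg_neg_of_pos hηpos)]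
      calc -(-η) = η := by ring
        _ < min η₁ η₂ := by rw [hηdef]; linarith [lt_min hη₁ hη₂]
        _ ≤ η₂ := min_le_right _ _
    have hchord : w + D • u + η • u - (w - η • u) = (D + 2 * η) • u := by
      module
    have hled := dist_le_dirDiam hb hP1 hP2 ⟨D + 2 * η, hchord⟩
    rw [dist_eq_norm, hchord, norm_smul, hu, mul_one, Real.norm_eq_abs,
      abs_of_pos (by linarith)] at hled
    linarith
  -- separating hyperplane
  have himgeq : (fun z => z + D • u) '' interior K = (fun z => D • u + z) '' interior K := by
    simp [add_comm]
  obtain ⟨f, c, hfs, hft⟩ :=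
    geometric_hahn_banach_open_open (hconv.interior) isOpen_interior
      (himgeq ▸ (hconv.interior).translate (D • u))
      ((isOpenMap_add_right (D • u)) _ isOpen_interior) hdisj
  -- extend the inequalities from the interior to K
  have hKle : ∀ z ∈ K, f z ≤ c := by
    intro z hz
    have h1 : interior K ⊆ {w | f w ≤ c} := fun w hw => le_of_lt (hfs w hw)
    have h2 : closure (interior K) ⊆ {w | f w ≤ c} :=
      (IsClosed.closure_subset_iff (isClosed_le f.continuous continuous_const)).mpr h1
    exact h2 (subset_closure_interior hconv hint hz)
  have hKge : ∀ z ∈ K, c ≤ f z + D * f u := by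
    intro z hz
    have h1 : interior K ⊆ {w | c ≤ f w + D * f u} := by
      intro w hw
      have := hft (w + D • u) ⟨w, hw, rfl⟩
      rw [map_add, map_smul, smul_eq_mul] at this
      exact le_of_lt this
    have h2 : closure (interior K) ⊆ {w | c ≤ f w + D * f u} :=
      (IsClosed.closure_subset_iff
        (isClosed_le continuous_const ((f.continuous).add continuous_const))).mpr h1
    exact h2 (subset_closure_interior hconv hint hz)
  -- f A = c and supporting properties
  have hfA : f A = c := by
    have h1 : f A ≤ c := hKle A hA
    have h2 : c ≤ f A := by
      have h3 := hKge B hB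
      have h4 : A = B + D • u := by rw [← hAB]; abel
      rw [h4, map_add, map_smul, smul_eq_mul]
      linarith
    linarith
  -- f as inner product
  set w₀ := (InnerProductSpace.toDual ℝ (EuclideanSpace ℝ (Fin n))).symm f with hw₀
  have hfw : ∀ z, ⟪w₀, z⟫ = f z := fun z => InnerProductSpace.toDual_symm_apply
  have hfu : 0 < f u := by
    obtain ⟨z₀, hz₀⟩ := hint
    have h1 := hfs z₀ hz₀
    have h2 := hft (z₀ + D • u) ⟨z₀, hz₀, rfl⟩
    rw [map_add, map_smul, smul_eq_mul] at h2
    nlinarith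
  have hw₀ne : w₀ ≠ 0 := by
    intro h
    have := hfw u
    rw [h] at this
    simp at this
    exact absurd this.symm (ne_of_gt hfu)
  set v := ‖w₀‖⁻¹ • w₀ with hv
  have hnw₀ : 0 < ‖w₀‖ := norm_pos_iff.mpr hw₀ne
  have hvnorm : ‖v‖ = 1 := by
    rw [hv, norm_smul, norm_inv, norm_norm, inv_mul_cancel₀ (ne_of_gt hnw₀)]
  have hinner : ∀ z, ⟪z, v⟫ = ‖w₀‖⁻¹ * f z := by
    intro z
    rw [hv, real_inner_smul_right, real_inner_comm, hfw]
  refine ⟨⟪A - B, v⟫, ⟨A, hA, B, hB, ⟨D, hAB⟩, ?_, v, hvnorm, ?_, ?_, rfl⟩, ?_⟩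
  · rw [dist_eq_norm, hAB, norm_smul, hu, mul_one, Real.norm_eq_abs, abs_of_pos hDpos]
  · intro z hz
    rw [hinner, hinner]
    have := hKle z hz
    have h2 : f z ≤ f A := by rw [hfA]; exact this
    exact mul_le_mul_of_nonneg_left h2 (le_of_lt (inv_pos.mpr hnw₀))
  · intro z hz
    rw [hinner, hinner]
    have h3 := hKge z hz
    have h4 : f B = c - D * f u := by
      have h5 : B = A - D • u := by rw [← hAB]; abel
      rw [h5, map_sub, map_smul, smul_eq_mul, hfA]
    have h6 : f B ≤ f z := by rw [h4]; linarith
    exact mul_le_mul_of_nonneg_left h6 (le_of_lt (inv_pos.mpr hnw₀))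
  · calc ⟪A - B, v⟫ ≤ ‖A - B‖ * ‖v‖ := real_inner_le_norm _ _
      _ = D := by
        rw [hvnorm, mul_one, hAB, norm_smul, hu, mul_one, Real.norm_eq_abs, abs_of_pos hDpos]

end RFnAux

namespace RFnAux
variable {n : ℕ}

lemma mem_of_subseq {Kj : ℕ → Set (EuclideanSpace ℝ (Fin n))} (hKjc : ∀ j, IsCompact (Kj j))
    (hdec : Antitone Kj) {φ : ℕ → ℕ} (hφ : StrictMono φ) {w : ℕ → EuclideanSpace ℝ (Fin n)}
    (hw : ∀ j, w j ∈ Kj (φ j)) {l : EuclideanSpace ℝ (Fin n)}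
    (hl : Tendsto w atTop (nhds l)) : ∀ m, l ∈ Kj m := by
  intro m
  have hev : ∀ᶠ j in atTop, w j ∈ Kj m := by
    rw [eventually_atTop]
    exact ⟨m, fun j hj => hdec (le_trans hj (hφ.le_apply)) (hw j)⟩
  exact (hKjc m).isClosed.mem_of_tendsto hl hev

lemma norm_unit_smul {u : EuclideanSpace ℝ (Fin n)} (hu : ‖u‖ = 1) (t : ℝ) :
    ‖t • u‖ = |t| := by rw [norm_smul, hu, mul_one, Real.norm_eq_abs]

lemma smul_coeff_eq_inner {u : EuclideanSpace ℝ (Fin n)} (hu : ‖u‖ = 1) (t : ℝ)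
    {w : EuclideanSpace ℝ (Fin n)} (h : w = t • u) : ⟪w, u⟫ = t := by
  rw [h, real_inner_smul_left, real_inner_self_eq_norm_mul_norm, hu]
  ring

lemma dirDiam_tendsto
    (Kj : ℕ → Set (EuclideanSpace ℝ (Fin n)))
    (hKjc : ∀ j, IsCompact (Kj j)) (hKjconv : ∀ j, Convex ℝ (Kj j))
    (hdec : Antitone Kj)
    (K : Set (EuclideanSpace ℝ (Fin n))) (hK : K = ⋂ j, Kj j)
    (hKint : (interior K).Nonempty)
    (uj : ℕ → EuclideanSpace ℝ (Fin n)) (huj : ∀ j, ‖uj j‖ = 1)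
    (u : EuclideanSpace ℝ (Fin n)) (hu : ‖u‖ = 1)
    (hconv : Filter.Tendsto uj Filter.atTop (nhds u)) :
    Filter.Tendsto (fun j => dirDiam (Kj j) (uj j)) Filter.atTop (nhds (dirDiam K u)) := by
  have hKsub : ∀ j, K ⊆ Kj j := fun j => hK ▸ Set.iInter_subset _ j
  have hKcl : IsClosed K := hK ▸ isClosed_iInter fun j => (hKjc j).isClosed
  have hKc : IsCompact K := (hKjc 0).of_isClosed_subset hKcl (hKsub 0)
  have hKb : Bornology.IsBounded K := hKc.isBounded
  have hKne : K.Nonempty := hKint.mono interior_subset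
  have hKjb : ∀ j, Bornology.IsBounded (Kj j) := fun j => (hKjc j).isBounded
  have hKjne : ∀ j, (Kj j).Nonempty := fun j => hKne.mono (hKsub j)
  set D := dirDiam K u with hD
  -- upper bound
  have hupper : ∀ ε : ℝ, 0 < ε → ∀ᶠ j in atTop, dirDiam (Kj j) (uj j) < D + ε := by
    intro ε hε
    by_contra hcon
    rw [Filter.not_eventually] at hcon
    have hcon' : ∃ᶠ j in atTop, D + ε ≤ dirDiam (Kj j) (uj j) :=
      hcon.mono fun j hj => not_lt.mp hj
    obtain ⟨φ, hφ, hφP⟩ := Filter.extraction_of_frequently_atTop hcon'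
    choose x hxm y hym hpar hdist using
      fun j => exists_dirDiam_attained (hKjc (φ j)) (hKjne (φ j)) (uj (φ j))
    have hx0 : ∀ j, x j ∈ Kj 0 := fun j => hdec (Nat.zero_le _) (hxm j)
    have hy0 : ∀ j, y j ∈ Kj 0 := fun j => hdec (Nat.zero_le _) (hym j)
    have hpc : IsCompact ((Kj 0) ×ˢ (Kj 0)) := (hKjc 0).prod (hKjc 0)
    obtain ⟨⟨a, b⟩, -, ψ, hψ, hlim⟩ :=
      hpc.tendsto_subseq (x := fun j => (x j, y j)) fun j => ⟨hx0 j, hy0 j⟩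
    have hxa : Tendsto (fun j => x (ψ j)) atTop (nhds a) := hlim.fst_nhds
    have hyb : Tendsto (fun j => y (ψ j)) atTop (nhds b) := hlim.snd_nhds
    have huφψ : Tendsto (fun j => uj (φ (ψ j))) atTop (nhds u) :=
      hconv.comp ((hφ.comp hψ).tendsto_atTop)
    have ha : a ∈ K := by
      rw [hK, Set.mem_iInter]
      exact mem_of_subseq hKjc hdec (hφ.comp hψ) (fun j => hxm (ψ j)) hxa
    have hb : b ∈ K := by
      rw [hK, Set.mem_iInter]
      exact mem_of_subseq hKjc hdec (hφ.comp hψ) (fun j => hym (ψ j)) hyb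
    have hparl : ∃ t : ℝ, a - b = t • u := by
      refine ⟨⟪a - b, u⟫, ?_⟩
      have h1 : Tendsto (fun j => x (ψ j) - y (ψ j)) atTop (nhds (a - b)) := hxa.sub hyb
      have ht : ∀ j, x (ψ j) - y (ψ j) = ⟪x (ψ j) - y (ψ j), uj (φ (ψ j))⟫ • uj (φ (ψ j)) := by
        intro j
        obtain ⟨t, htj⟩ := hpar (ψ j)
        rw [smul_coeff_eq_inner (huj _) t htj]
        exact htj
      have h2 : Tendsto (fun j => ⟪x (ψ j) - y (ψ j), uj (φ (ψ j))⟫ • uj (φ (ψ j))) atTop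
          (nhds (⟪a - b, u⟫ • u)) := (h1.inner huφψ).smul huφψ
      have h3 : Tendsto (fun j => x (ψ j) - y (ψ j)) atTop (nhds (⟪a - b, u⟫ • u)) :=
        h2.congr fun j => (ht j).symm
      exact tendsto_nhds_unique h1 h3
    have hcontr : D + ε ≤ dist a b := by
      have h1 : Tendsto (fun j => dist (x (ψ j)) (y (ψ j))) atTop (nhds (dist a b)) :=
        hxa.dist hyb
      refine le_of_tendsto_of_tendsto' tendsto_const_nhds h1 fun j => ?_
      rw [hdist (ψ j)]
      exact hφP (ψ j)
    have hle : dist a b ≤ D := dist_le_dirDiam hKb ha hb hparl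
    linarith
  -- lower bound
  have hlower : ∀ ε : ℝ, 0 < ε → ∀ᶠ j in atTop, D - ε < dirDiam (Kj j) (uj j) := by
    intro ε hε
    obtain ⟨x, hx, y, hy, ⟨t, ht⟩, hdist⟩ := exists_dirDiam_attained hKc hKne u
    have habs : |t| = D := by
      rw [hD, ← hdist, dist_eq_norm, ht, norm_unit_smul hu]
    obtain ⟨z, hz⟩ := hKint
    obtain ⟨δ, hδ, hball⟩ := Metric.isOpen_iff.mp isOpen_interior z hz
    have hzK : ∀ j, z ∈ Kj j := fun j => hKsub j (interior_subset hz)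
    set lam := min (1/2 : ℝ) (ε / (2 * (D + 1))) with hlam
    have hDnn : 0 ≤ D := dirDiam_nonneg hKb hKne u
    have hlam0 : 0 < lam := lt_min (by norm_num) (by positivity)
    have hlam1 : lam < 1 := lt_of_le_of_lt (min_le_left _ _) (by norm_num)
    have hlamD : lam * D ≤ ε / 2 := by
      have h1 : lam ≤ ε / (2 * (D + 1)) := min_le_right _ _
      have h2 : lam * D ≤ (ε / (2 * (D + 1))) * D := mul_le_mul_of_nonneg_right h1 hDnn
      have h3 : (ε / (2 * (D + 1))) * D ≤ ε / 2 := by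
        rw [div_mul_eq_mul_div, div_le_div_iff₀ (by positivity) (by norm_num)]
        nlinarith
      linarith
    have hev : ∀ᶠ j in atTop, ‖uj j - u‖ < lam * δ / (D + 1) := by
      have h1 := tendsto_iff_norm_sub_tendsto_zero.mp hconv
      exact h1.eventually (eventually_lt_nhds (by positivity))
    refine hev.mono fun j hj => ?_
    have hj' : ‖u - uj j‖ < lam * δ / (D + 1) := by rw [norm_sub_rev]; exact hj
    set a := (1 - lam) • x + lam • z with hadef
    set z' := z + ((1 - lam) * t / lam) • (u - uj j) with hz'def
    have haK : a ∈ Kj j :=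
      hKjconv j (hKsub j hx) (hzK j) (by linarith) (le_of_lt hlam0) (by ring)
    have hz'K : z' ∈ Kj j := by
      refine hKsub j (interior_subset (hball ?_))
      rw [Metric.mem_ball, hz'def, dist_eq_norm]
      have he : z + ((1 - lam) * t / lam) • (u - uj j) - z
          = ((1 - lam) * t / lam) • (u - uj j) := by abel
      rw [he, norm_smul, Real.norm_eq_abs]
      have habs2 : |(1 - lam) * t / lam| ≤ D / lam := by
        rw [abs_div, abs_of_pos hlam0, div_le_div_iff_of_pos_right hlam0, abs_mul, habs]
        have h1 : |1 - lam| ≤ 1 := by rw [abs_of_pos (by linarith)]; linarith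
        nlinarith [abs_nonneg (1 - lam), hDnn]
      calc |(1 - lam) * t / lam| * ‖u - uj j‖
          ≤ (D / lam) * ‖u - uj j‖ :=
            mul_le_mul_of_nonneg_right habs2 (norm_nonneg _)
        _ ≤ (D / lam) * (lam * δ / (D + 1)) :=
            mul_le_mul_of_nonneg_left (le_of_lt hj') (by positivity)
        _ = D * δ / (D + 1) := by field_simp
        _ < δ := by
            rw [div_lt_iff₀ (by positivity)]
            nlinarith
    have hxy : x = y + t • u := by rw [← ht]; abel
    set b := a - ((1 - lam) * t) • uj j with hbdef
    have hkey : lam • (((1 - lam) * t / lam) • (u - uj j)) = ((1 - lam) * t) • (u - uj j) := by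
      rw [smul_smul]
      congr 1
      field_simp
    have hbeq : (1 - lam) • y + lam • z' = b := by
      rw [hz'def, smul_add, hkey, hbdef, hadef, hxy]
      module
    have hbK : b ∈ Kj j := by
      rw [← hbeq]
      exact hKjconv j (hKsub j hy) hz'K (by linarith) (le_of_lt hlam0) (by ring)
    have hchord : a - b = ((1 - lam) * t) • uj j := by rw [hbdef]; abel
    have hdab : dist a b = (1 - lam) * D := by
      rw [dist_eq_norm, hchord, norm_unit_smul (huj j), abs_mul, habs,
        abs_of_pos (by linarith)]
    have hle := dist_le_dirDiam (hKjb j) haK hbK ⟨(1 - lam) * t, hchord⟩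
    rw [hdab] at hle
    nlinarith
  -- combine
  rw [Metric.tendsto_nhds]
  intro ε hε
  filter_upwards [hupper ε hε, hlower ε hε] with j h1 h2
  rw [Real.dist_eq, abs_sub_lt_iff]
  constructor <;> linarith
end RFnAux

namespace RFnAux
variable {n : ℕ}

lemma dirDiam_le_diam {K K0 : Set (EuclideanSpace ℝ (Fin n))} (hb : Bornology.IsBounded K0)
    (hsub : K ⊆ K0) (hne : K.Nonempty) (u : EuclideanSpace ℝ (Fin n)) :
    dirDiam K u ≤ Metric.diam K0 := by
  rw [dirDiam_eq_sSup]
  refine csSup_le ⟨0, zero_mem_chordSet hne u⟩ ?_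
  rintro d ⟨x, hx, y, hy, -, rfl⟩
  exact Metric.dist_le_diam_of_mem hb (hsub hx) (hsub hy)

lemma rFn_le_liminf
    (Kj : ℕ → Set (EuclideanSpace ℝ (Fin n)))
    (hKjc : ∀ j, IsCompact (Kj j)) (hKjconv : ∀ j, Convex ℝ (Kj j))
    (hKjint : ∀ j, (interior (Kj j)).Nonempty) (hdec : Antitone Kj)
    (K : Set (EuclideanSpace ℝ (Fin n))) (hK : K = ⋂ j, Kj j)
    (hKint : (interior K).Nonempty)
    (uj : ℕ → EuclideanSpace ℝ (Fin n)) (huj : ∀ j, ‖uj j‖ = 1)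
    (u : EuclideanSpace ℝ (Fin n)) (hu : ‖u‖ = 1)
    (hconv : Filter.Tendsto uj Filter.atTop (nhds u)) :
    rFn K u ≤ Filter.liminf (fun j => rFn (Kj j) (uj j)) Filter.atTop := by
  have hKsub : ∀ j, K ⊆ Kj j := fun j => hK ▸ Set.iInter_subset _ j
  have hKcl : IsClosed K := hK ▸ isClosed_iInter fun j => (hKjc j).isClosed
  have hKc : IsCompact K := (hKjc 0).of_isClosed_subset hKcl (hKsub 0)
  have hKconv : Convex ℝ K := hK ▸ convex_iInter fun j => hKjconv j
  have hKne : K.Nonempty := hKint.mono interior_subset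
  have hKjne : ∀ j, (Kj j).Nonempty := fun j => hKne.mono (hKsub j)
  have hdd := dirDiam_tendsto Kj hKjc hKjconv hdec K hK hKint uj huj u hu hconv
  -- boundedness of the sequence
  have hub : ∀ j, rFn (Kj j) (uj j) ≤ Metric.diam (Kj 0) := by
    intro j
    obtain ⟨d, hd, hdle⟩ := exists_rSet_mem (hKjc j) (hKjconv j) (hKjint j) (huj j)
    calc rFn (Kj j) (uj j) ≤ d := csInf_le (rSet_bddBelow _ _) hd
      _ ≤ dirDiam (Kj j) (uj j) := hdle
      _ ≤ Metric.diam (Kj 0) :=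
        dirDiam_le_diam (hKjc 0).isBounded (hdec (Nat.zero_le j)) (hKjne j) _
  by_contra hcon
  push_neg at hcon
  obtain ⟨b, hb1, hb2⟩ := exists_between hcon
  have hcob : IsCoboundedUnder (· ≥ ·) atTop (fun j => rFn (Kj j) (uj j)) :=
    IsBoundedUnder.isCoboundedUnder_ge (isBoundedUnder_of ⟨Metric.diam (Kj 0), hub⟩)
  have hfreq : ∃ᶠ j in atTop, rFn (Kj j) (uj j) < b :=
    frequently_lt_of_liminf_lt hcob hb1
  obtain ⟨φ, hφ, hφP⟩ := Filter.extraction_of_frequently_atTop hfreq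
  have hels : ∀ j, ∃ d ∈ rSet (Kj (φ j)) (uj (φ j)), d < b := by
    intro j
    have hne : (rSet (Kj (φ j)) (uj (φ j))).Nonempty := by
      obtain ⟨d, hd, -⟩ := exists_rSet_mem (hKjc (φ j)) (hKjconv (φ j)) (hKjint (φ j)) (huj (φ j))
      exact ⟨d, hd⟩
    exact exists_lt_of_csInf_lt hne (hφP j)
  choose d hd hdb using hels
  choose A hA B hB hpar hdd' v hv hs1 hs2 hdval using hd
  -- compactness
  have hsc : IsCompact (((Kj 0) ×ˢ (Kj 0)) ×ˢ sphere (0 : EuclideanSpace ℝ (Fin n)) 1) :=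
    ((hKjc 0).prod (hKjc 0)).prod (isCompact_sphere _ _)
  obtain ⟨⟨⟨A₀, B₀⟩, v₀⟩, ⟨⟨-, -⟩, hv₀s⟩, ψ, hψ, hlim⟩ :=
    hsc.tendsto_subseq (x := fun j => ((A j, B j), v j))
      (fun j => ⟨⟨hdec (Nat.zero_le _) (hA j), hdec (Nat.zero_le _) (hB j)⟩,
        mem_sphere_zero_iff_norm.mpr (hv j)⟩)
  have hAlim : Tendsto (fun j => A (ψ j)) atTop (nhds A₀) := hlim.fst_nhds.fst_nhds
  have hBlim : Tendsto (fun j => B (ψ j)) atTop (nhds B₀) := hlim.fst_nhds.snd_nhds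
  have hvlim : Tendsto (fun j => v (ψ j)) atTop (nhds v₀) := hlim.snd_nhds
  have huφψ : Tendsto (fun j => uj (φ (ψ j))) atTop (nhds u) :=
    hconv.comp ((hφ.comp hψ).tendsto_atTop)
  have hA₀ : A₀ ∈ K := by
    rw [hK, Set.mem_iInter]
    exact mem_of_subseq hKjc hdec (hφ.comp hψ) (fun j => hA (ψ j)) hAlim
  have hB₀ : B₀ ∈ K := by
    rw [hK, Set.mem_iInter]
    exact mem_of_subseq hKjc hdec (hφ.comp hψ) (fun j => hB (ψ j)) hBlim
  have hv₀ : ‖v₀‖ = 1 := mem_sphere_zero_iff_norm.mp hv₀s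
  have hABlim : Tendsto (fun j => A (ψ j) - B (ψ j)) atTop (nhds (A₀ - B₀)) := hAlim.sub hBlim
  have hparl : ∃ t : ℝ, A₀ - B₀ = t • u := by
    refine ⟨⟪A₀ - B₀, u⟫, ?_⟩
    have ht : ∀ j, A (ψ j) - B (ψ j)
        = ⟪A (ψ j) - B (ψ j), uj (φ (ψ j))⟫ • uj (φ (ψ j)) := by
      intro j
      obtain ⟨t, htj⟩ := hpar (ψ j)
      rw [smul_coeff_eq_inner (huj _) t htj]
      exact htj
    have h2 : Tendsto (fun j => ⟪A (ψ j) - B (ψ j), uj (φ (ψ j))⟫ • uj (φ (ψ j))) atTop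
        (nhds (⟪A₀ - B₀, u⟫ • u)) := (hABlim.inner huφψ).smul huφψ
    exact tendsto_nhds_unique hABlim (h2.congr fun j => (ht j).symm)
  have hdist₀ : dist A₀ B₀ = dirDiam K u := by
    have h1 : Tendsto (fun j => dist (A (ψ j)) (B (ψ j))) atTop (nhds (dist A₀ B₀)) :=
      hAlim.dist hBlim
    have h2 : Tendsto (fun j => dirDiam (Kj (φ (ψ j))) (uj (φ (ψ j)))) atTop
        (nhds (dirDiam K u)) := hdd.comp ((hφ.comp hψ).tendsto_atTop)
    exact tendsto_nhds_unique (h1.congr fun j => hdd' (ψ j)) h2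
  have hsup1 : ∀ x ∈ K, ⟪x, v₀⟫ ≤ ⟪A₀, v₀⟫ := by
    intro x hx
    refine le_of_tendsto_of_tendsto' (tendsto_const_nhds.inner hvlim) (hAlim.inner hvlim)
      fun j => hs1 (ψ j) x (hKsub _ hx)
  have hsup2 : ∀ x ∈ K, ⟪B₀, v₀⟫ ≤ ⟪x, v₀⟫ := by
    intro x hx
    refine le_of_tendsto_of_tendsto' (hBlim.inner hvlim) (tendsto_const_nhds.inner hvlim)
      fun j => hs2 (ψ j) x (hKsub _ hx)
  have hmem : ⟪A₀ - B₀, v₀⟫ ∈ rSet K u :=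
    ⟨A₀, hA₀, B₀, hB₀, hparl, hdist₀, v₀, hv₀, hsup1, hsup2, rfl⟩
  have hd₀b : ⟪A₀ - B₀, v₀⟫ ≤ b := by
    have h1 : Tendsto (fun j => ⟪A (ψ j) - B (ψ j), v (ψ j)⟫) atTop
        (nhds ⟪A₀ - B₀, v₀⟫) := hABlim.inner hvlim
    refine le_of_tendsto_of_tendsto' h1 tendsto_const_nhds fun j => ?_
    rw [← hdval (ψ j)]
    exact (hdb (ψ j)).le
  have : rFn K u ≤ b := le_trans (csInf_le (rSet_bddBelow _ _) hmem) hd₀b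
  linarith
end RFnAux

theorem dirDiam_tendsto_and_rFn_liminf {n : ℕ} (hn : 2 ≤ n)
    (Kj : ℕ → Set (EuclideanSpace ℝ (Fin n)))
    (hKjc : ∀ j, IsCompact (Kj j)) (hKjconv : ∀ j, Convex ℝ (Kj j))
    (hKjint : ∀ j, (interior (Kj j)).Nonempty) (hdec : Antitone Kj)
    (K : Set (EuclideanSpace ℝ (Fin n))) (hK : K = ⋂ j, Kj j)
    (hKint : (interior K).Nonempty)
    (uj : ℕ → EuclideanSpace ℝ (Fin n)) (huj : ∀ j, ‖uj j‖ = 1)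
    (u : EuclideanSpace ℝ (Fin n)) (hu : ‖u‖ = 1)
    (hconv : Filter.Tendsto uj Filter.atTop (nhds u)) :
    Filter.Tendsto (fun j => dirDiam (Kj j) (uj j)) Filter.atTop (nhds (dirDiam K u)) ∧
    rFn K u ≤ Filter.liminf (fun j => rFn (Kj j) (uj j)) Filter.atTop ∧
    LowerSemicontinuousOn (rFn K) (sphere (0 : EuclideanSpace ℝ (Fin n)) 1) := by
  have hKsub : ∀ j, K ⊆ Kj j := fun j => hK ▸ Set.iInter_subset _ j
  have hKcl : IsClosed K := hK ▸ isClosed_iInter fun j => (hKjc j).isClosed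
  have hKc : IsCompact K := (hKjc 0).of_isClosed_subset hKcl (hKsub 0)
  have hKconv : Convex ℝ K := hK ▸ convex_iInter fun j => hKjconv j
  refine ⟨RFnAux.dirDiam_tendsto Kj hKjc hKjconv hdec K hK hKint uj huj u hu hconv,
    RFnAux.rFn_le_liminf Kj hKjc hKjconv hKjint hdec K hK hKint uj huj u hu hconv, ?_⟩
  intro u₀ hu₀mem b hb
  by_contra hcon
  rw [Filter.not_eventually] at hcon
  have hu₀ : ‖u₀‖ = 1 := mem_sphere_zero_iff_norm.mp hu₀mem
  have hseq : ∀ m : ℕ, ∃ v, v ∈ sphere (0 : EuclideanSpace ℝ (Fin n)) 1 ∧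
      dist v u₀ < 1 / (m + 1) ∧ rFn K v ≤ b := by
    intro m
    have hball : ball u₀ (1 / (m + 1) : ℝ) ∈
        nhdsWithin u₀ (sphere (0 : EuclideanSpace ℝ (Fin n)) 1) :=
      nhdsWithin_le_nhds (ball_mem_nhds _ (by positivity))
    have hsph : sphere (0 : EuclideanSpace ℝ (Fin n)) 1 ∈
        nhdsWithin u₀ (sphere (0 : EuclideanSpace ℝ (Fin n)) 1) := self_mem_nhdsWithin
    have hball' : ∀ᶠ x in nhdsWithin u₀ (sphere (0 : EuclideanSpace ℝ (Fin n)) 1),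
        x ∈ ball u₀ (1 / (m + 1) : ℝ) := hball
    have hsph' : ∀ᶠ x in nhdsWithin u₀ (sphere (0 : EuclideanSpace ℝ (Fin n)) 1),
        x ∈ sphere (0 : EuclideanSpace ℝ (Fin n)) 1 := hsph
    obtain ⟨w, hnb, hwb, hws⟩ := (hcon.and_eventually (hball'.and hsph')).exists
    exact ⟨w, hws, by simpa [Metric.mem_ball] using hwb, not_lt.mp hnb⟩
  choose v hvs hvd hvb using hseq
  have hvnorm : ∀ m, ‖v m‖ = 1 := fun m => mem_sphere_zero_iff_norm.mp (hvs m)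
  have hvt : Tendsto v atTop (nhds u₀) := by
    rw [tendsto_iff_dist_tendsto_zero]
    exact squeeze_zero (fun m => dist_nonneg) (fun m => (hvd m).le)
      tendsto_one_div_add_atTop_nhds_zero_nat
  have h2 := RFnAux.rFn_le_liminf (fun _ => K) (fun _ => hKc) (fun _ => hKconv)
    (fun _ => hKint) (fun _ _ _ => le_refl K) K (Set.iInter_const K).symm hKint
    v hvnorm u₀ hu₀ hvt
  have h3 : Filter.liminf (fun m => rFn K (v m)) Filter.atTop ≤ b :=
    liminf_le_of_frequently_le (Filter.Frequently.of_forall fun m => hvb m)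
      (isBoundedUnder_of ⟨0, fun m => RFnAux.rFn_nonneg' K (v m)⟩)
  linarith
end
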